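/- arXiv:1905.12141 — 5 statements merged into one kernel-verified Lean document; each statement's English description precedes it below -/
import Mathlib

section
/- For all real numbers a > 0 and b ≥ 0, the integral ∫₀^∞ y^{-5/2} · exp(-a/y - b·y) dy equals Γ(3/2) · a^{-3/2} · (1 + 2·√(a·b)) · exp(-2·√(a·b)). -/
open Real MeasureTheory
open Set Filter


lemma aux_mul_exp_le {x : ℝ} (hx : 0 ≤ x) : x * Real.exp (-x) ≤ 1 := by
  have h := Real.add_one_le_exp x
  have h2 : x ≤ Real.exp x := by linarith
  calc x * Real.exp (-x) ≤ Real.exp x * Real.exp (-x) :=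
        mul_le_mul_of_nonneg_right h2 (Real.exp_nonneg _)
    _ = 1 := by rw [← Real.exp_add]; simp

lemma contE (c : ℝ) : ContinuousOn (fun s : ℝ => Real.exp (-s^2 - c/s^2)) (Ioi 0) := by
  apply Real.continuous_exp.comp_continuousOn
  apply ContinuousOn.sub
  · exact ((continuous_pow 2).neg).continuousOn
  · exact continuousOn_const.div ((continuous_pow 2).continuousOn)
      (fun x hx => pow_ne_zero _ (ne_of_gt hx))

lemma intE {c : ℝ} (hc : 0 ≤ c) :
    IntegrableOn (fun s : ℝ => Real.exp (-s^2 - c/s^2)) (Ioi 0) := by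
  apply Integrable.mono' ((integrable_exp_neg_mul_sq (one_pos)).integrableOn)
  · exact (contE c).aestronglyMeasurable measurableSet_Ioi
  · refine (ae_restrict_iff' measurableSet_Ioi).2 (ae_of_all _ fun x hx => ?_)
    rw [Real.norm_eq_abs, abs_of_pos (Real.exp_pos _)]
    apply Real.exp_le_exp.2
    have : 0 ≤ c / x^2 := div_nonneg hc (sq_nonneg x)
    nlinarith
lemma intSqE {c : ℝ} (hc : 0 ≤ c) :
    IntegrableOn (fun s : ℝ => s^2 * Real.exp (-s^2 - c/s^2)) (Ioi 0) := by
  apply Integrable.mono' (((integrable_exp_neg_mul_sq (b := 1/2) (by norm_num)).const_mul 2).integrableOn)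
  · exact (((continuous_pow 2).continuousOn).mul (contE c)).aestronglyMeasurable measurableSet_Ioi
  · refine (ae_restrict_iff' measurableSet_Ioi).2 (ae_of_all _ fun x hx => ?_)
    have hx0 : (0:ℝ) < x := hx
    have h1 : 0 ≤ c / x^2 := div_nonneg hc (sq_nonneg x)
    rw [Real.norm_eq_abs, abs_of_nonneg (by positivity)]
    have key : x^2 * Real.exp (-x^2 - c/x^2) ≤ x^2 * Real.exp (-x^2) := by
      apply mul_le_mul_of_nonneg_left _ (sq_nonneg x)
      exact Real.exp_le_exp.2 (by linarith)
    have h2 : x^2 * Real.exp (-x^2) ≤ 2 * Real.exp (-(1/2) * x^2) := by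
      have h3 : x^2/2 * Real.exp (-(x^2/2)) ≤ 1 := aux_mul_exp_le (by positivity)
      have h4 : Real.exp (-x^2) = Real.exp (-(x^2/2)) * Real.exp (-(x^2/2)) := by
        rw [← Real.exp_add]; ring_nf
      have h5 : Real.exp (-(1/2) * x^2) = Real.exp (-(x^2/2)) := by ring_nf
      rw [h4, h5]
      nlinarith [Real.exp_nonneg (-(x^2/2)), Real.exp_pos (-(x^2/2))]
    linarith

lemma intCDivE {c : ℝ} (hc : 0 ≤ c) :
    IntegrableOn (fun s : ℝ => c/s^2 * Real.exp (-s^2 - c/s^2)) (Ioi 0) := by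
  apply Integrable.mono' ((integrable_exp_neg_mul_sq (b := 1) one_pos).integrableOn)
  · refine ((ContinuousOn.div continuousOn_const ((continuous_pow 2).continuousOn)
      (fun x hx => pow_ne_zero _ (ne_of_gt hx))).mul (contE c)).aestronglyMeasurable measurableSet_Ioi
  · refine (ae_restrict_iff' measurableSet_Ioi).2 (ae_of_all _ fun x hx => ?_)
    have hx0 : (0:ℝ) < x := hx
    have h1 : 0 ≤ c / x^2 := div_nonneg hc (sq_nonneg x)
    rw [Real.norm_eq_abs, abs_of_nonneg (by positivity)]
    have h2 : Real.exp (-x^2 - c/x^2) = Real.exp (-x^2) * Real.exp (-(c/x^2)) := by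
      rw [← Real.exp_add]; ring_nf
    have h3 : c/x^2 * Real.exp (-(c/x^2)) ≤ 1 := aux_mul_exp_le h1
    rw [h2]
    calc c/x^2 * (Real.exp (-x^2) * Real.exp (-(c/x^2)))
        = (c/x^2 * Real.exp (-(c/x^2))) * Real.exp (-x^2) := by ring
      _ ≤ 1 * Real.exp (-x^2) := mul_le_mul_of_nonneg_right h3 (Real.exp_nonneg _)
      _ = Real.exp (-1 * x^2) := by rw [one_mul]; ring_nf
lemma reflect {k : ℝ} (hk : 0 < k) :
    ∫ s in Ioi (0:ℝ), Real.exp (-s^2 - k^2/s^2)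
      = ∫ s in Ioi (0:ℝ), (k/s^2) * Real.exp (-s^2 - k^2/s^2) := by
  have himg : (fun s : ℝ => k / s) '' Ioi 0 = Ioi 0 := by
    ext t
    constructor
    · rintro ⟨s, hs, rfl⟩
      exact div_pos hk hs
    · intro ht
      exact ⟨k / t, div_pos hk ht, by field_simp⟩
  have hderiv : ∀ x ∈ Ioi (0:ℝ), HasDerivWithinAt (fun s : ℝ => k / s) (-(k/x^2)) (Ioi 0) x := by
    intro x hx
    have h : HasDerivAt (fun s : ℝ => k / s) (-(k/x^2)) x := by
      have := (hasDerivAt_inv (ne_of_gt (show (0:ℝ) < x from hx))).const_mul k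
      have heq : (fun s : ℝ => k / s) = fun s : ℝ => k * s⁻¹ := by
        funext s; rw [div_eq_mul_inv]
      rw [heq]
      refine this.congr_deriv ?_
      ring
    exact h.hasDerivWithinAt
  have hinj : InjOn (fun s : ℝ => k / s) (Ioi 0) := by
    intro x hx y hy h
    have hx0 : (0:ℝ) < x := hx
    have hy0 : (0:ℝ) < y := hy
    simp only at h
    rw [div_eq_div_iff (ne_of_gt hx0) (ne_of_gt hy0)] at h
    exact (mul_left_cancel₀ (ne_of_gt hk) h).symm
  have := integral_image_eq_integral_abs_deriv_smul measurableSet_Ioi hderiv hinj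
    (fun s => Real.exp (-s^2 - k^2/s^2))
  rw [himg] at this
  rw [this]
  apply setIntegral_congr_fun measurableSet_Ioi
  intro x hx
  have hx0 : (0:ℝ) < x := hx
  have he : -(k/x)^2 - k^2/(k/x)^2 = -x^2 - k^2/x^2 := by
    field_simp
    ring
  simp only [smul_eq_mul, abs_neg, abs_of_pos (div_pos hk (pow_pos hx0 2)), he]
lemma glasser {k : ℝ} (hk : 0 < k) :
    ∫ s in Ioi (0:ℝ), (1 + k/s^2) * Real.exp (-(s - k/s)^2) = Real.sqrt π := by
  set f : ℝ → ℝ := fun s => s - k/s with hf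
  have himg : f '' Ioi 0 = univ := by
    apply eq_univ_of_forall
    intro u
    set D := Real.sqrt (u^2 + 4*k) with hD
    have hD2 : D^2 = u^2 + 4*k := Real.sq_sqrt (by positivity)
    have hDnn : 0 ≤ D := Real.sqrt_nonneg _
    have hs0 : 0 < (u + D)/2 := by nlinarith
    refine ⟨(u + D)/2, hs0, ?_⟩
    show (u + D)/2 - k/((u + D)/2) = u
    have hne : u + D ≠ 0 := by
      intro h
      rw [h] at hs0
      simp at hs0
    field_simp
    nlinarith
  have hderiv : ∀ x ∈ Ioi (0:ℝ), HasDerivWithinAt f (1 + k/x^2) (Ioi 0) x := by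
    intro x hx
    have hx0 : (0:ℝ) < x := hx
    have h1 : HasDerivAt (fun s : ℝ => k / s) (-(k/x^2)) x := by
      have heq : (fun s : ℝ => k / s) = fun s : ℝ => k * s⁻¹ := by
        funext s; rw [div_eq_mul_inv]
      rw [heq]
      refine ((hasDerivAt_inv (ne_of_gt hx0)).const_mul k).congr_deriv ?_
      ring
    have h2 : HasDerivAt f (1 - -(k/x^2)) x := (hasDerivAt_id x).sub h1
    have h3 : HasDerivAt f (1 + k/x^2) x := by convert h2 using 1; ring
    exact h3.hasDerivWithinAt
  have hinj : InjOn f (Ioi 0) := by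
    have hmono : StrictMonoOn f (Ioi 0) := by
      intro x hx y hy hxy
      have hx0 : (0:ℝ) < x := hx
      have hy0 : (0:ℝ) < y := hy
      have : k/y < k/x := by
        apply div_lt_div_of_pos_left hk hx0 hxy
      show x - k/x < y - k/y
      linarith
    exact hmono.injOn
  have key := integral_image_eq_integral_abs_deriv_smul measurableSet_Ioi hderiv hinj
    (fun u => Real.exp (-u^2))
  rw [himg] at key
  have lhs_val : ∫ u in (univ : Set ℝ), Real.exp (-u^2) = Real.sqrt π := by
    rw [Measure.restrict_univ]
    have := integral_gaussian 1
    simpa using this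
  rw [lhs_val] at key
  rw [key]
  apply setIntegral_congr_fun measurableSet_Ioi
  intro x hx
  have hx0 : (0:ℝ) < x := hx
  have hpos : 0 < 1 + k/x^2 := by positivity
  simp only [smul_eq_mul, abs_of_pos hpos, hf]
lemma ibp {c : ℝ} (hc : 0 ≤ c) :
    ∫ s in Ioi (0:ℝ), (s^2 - 1/2 - c/s^2) * Real.exp (-s^2 - c/s^2) = 0 := by
  set H : ℝ → ℝ := fun s => -(1/2) * s * Real.exp (-s^2 - c/s^2) with hH
  have hH0 : H 0 = 0 := by simp [hH]
  have hbound : ∀ s : ℝ, ‖H s‖ ≤ 1/2 * |s| := by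
    intro s
    rcases eq_or_ne s 0 with rfl | hs
    · simp [hH]
    · have hexp : Real.exp (-s^2 - c/s^2) ≤ 1 := by
        rw [Real.exp_le_one_iff]
        have h1 : 0 ≤ c/s^2 := div_nonneg hc (sq_nonneg s)
        nlinarith [sq_nonneg s]
      rw [hH]
      simp only [norm_mul, norm_neg, Real.norm_eq_abs]
      rw [abs_of_pos (Real.exp_pos _), abs_of_pos (show (0:ℝ) < 1/2 by norm_num)]
      nlinarith [abs_nonneg s, Real.exp_pos (-s^2 - c/s^2)]
  have hcont : ContinuousWithinAt H (Ici 0) 0 := by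
    rw [ContinuousWithinAt, hH0]
    apply squeeze_zero_norm hbound
    have : Tendsto (fun s : ℝ => 1/2 * |s|) (nhds 0) (nhds 0) := by
      have := (continuous_abs.tendsto (0:ℝ)).const_mul (1/2 : ℝ)
      simpa using this
    exact this.mono_left nhdsWithin_le_nhds
  have hderiv : ∀ x ∈ Ioi (0:ℝ), HasDerivAt H ((x^2 - 1/2 - c/x^2) * Real.exp (-x^2 - c/x^2)) x := by
    intro x hx
    have hx0 : (0:ℝ) < x := hx
    have hx2 : (x:ℝ)^2 ≠ 0 := by positivity
    have hpow : HasDerivAt (fun s : ℝ => s^2) (2*x) x := by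
      simpa using hasDerivAt_pow 2 x
    have hu : HasDerivAt (fun s : ℝ => -s^2 - c/s^2)
        (-(2*x) - (0 * x^2 - c * (2*x)) / (x^2)^2) x :=
      (hpow.neg).sub ((hasDerivAt_const x c).div hpow hx2)
    have hexp := hu.exp
    have hmul := ((hasDerivAt_id x).mul hexp).const_mul (-(1/2) : ℝ)
    refine (hmul.congr_deriv ?_).congr_of_eventuallyEq (Filter.Eventually.of_forall fun y => ?_)
    · simp only [id]
      field_simp
      ring
    · simp only [hH, id, Pi.mul_apply]
      ring
  have hint : IntegrableOn (fun x : ℝ => (x^2 - 1/2 - c/x^2) * Real.exp (-x^2 - c/x^2)) (Ioi 0) := by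
    have heq : (fun x : ℝ => (x^2 - 1/2 - c/x^2) * Real.exp (-x^2 - c/x^2))
        = fun x : ℝ => x^2 * Real.exp (-x^2 - c/x^2) - 1/2 * Real.exp (-x^2 - c/x^2)
          - c/x^2 * Real.exp (-x^2 - c/x^2) := by
      funext x; ring
    rw [heq]
    exact ((intSqE hc).sub ((intE hc).const_mul (1/2))).sub (intCDivE hc)
  have htop : Tendsto H atTop (nhds 0) := by
    have hg : Tendsto (fun s : ℝ => 1/2 * (s * Real.exp (-s))) atTop (nhds 0) := by
      have h0 := (Real.tendsto_pow_mul_exp_neg_atTop_nhds_zero 1).const_mul (1/2 : ℝ)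
      simp only [pow_one, mul_zero] at h0
      exact h0
    apply squeeze_zero_norm' _ hg
    filter_upwards [eventually_ge_atTop (1:ℝ)] with s hs
    have hs0 : (0:ℝ) < s := by linarith
    have h1 : Real.exp (-s^2 - c/s^2) ≤ Real.exp (-s) := by
      apply Real.exp_le_exp.2
      have : 0 ≤ c/s^2 := div_nonneg hc (sq_nonneg s)
      nlinarith
    have h2 : ‖H s‖ = 1/2 * s * Real.exp (-s^2 - c/s^2) := by
      rw [hH]
      simp only [norm_mul, norm_neg, Real.norm_eq_abs]
      rw [abs_of_pos (Real.exp_pos _), abs_of_pos hs0]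
      norm_num
    rw [h2]
    nlinarith [Real.exp_pos (-s^2 - c/s^2), Real.exp_pos (-s)]
  have := integral_Ioi_of_hasDerivAt_of_tendsto hcont hderiv hint htop
  rw [this, hH0, sub_zero]
lemma keylem {c : ℝ} (hc : 0 ≤ c) :
    ∫ s in Ioi (0:ℝ), s^2 * Real.exp (-s^2 - c/s^2)
      = Real.sqrt π / 4 * (1 + 2 * Real.sqrt c) * Real.exp (-2 * Real.sqrt c) := by
  -- step 1: ∫ s² E = (1/2) ∫ E + ∫ (c/s²) E
  have step1 : ∫ s in Ioi (0:ℝ), s^2 * Real.exp (-s^2 - c/s^2)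
      = (1/2) * (∫ s in Ioi (0:ℝ), Real.exp (-s^2 - c/s^2))
        + ∫ s in Ioi (0:ℝ), c/s^2 * Real.exp (-s^2 - c/s^2) := by
    have heq : (fun s : ℝ => s^2 * Real.exp (-s^2 - c/s^2))
        = fun s : ℝ => (s^2 - 1/2 - c/s^2) * Real.exp (-s^2 - c/s^2)
          + (1/2 * Real.exp (-s^2 - c/s^2) + c/s^2 * Real.exp (-s^2 - c/s^2)) := by
      funext s; ring
    have hibpint : IntegrableOn
        (fun x : ℝ => (x^2 - 1/2 - c/x^2) * Real.exp (-x^2 - c/x^2)) (Ioi 0) := by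
      have h2 : (fun x : ℝ => (x^2 - 1/2 - c/x^2) * Real.exp (-x^2 - c/x^2))
          = fun x : ℝ => x^2 * Real.exp (-x^2 - c/x^2) - 1/2 * Real.exp (-x^2 - c/x^2)
            - c/x^2 * Real.exp (-x^2 - c/x^2) := by
        funext x; ring
      rw [h2]
      exact ((intSqE hc).sub ((intE hc).const_mul (1/2))).sub (intCDivE hc)
    have i1 : IntegrableOn (fun s : ℝ => 1/2 * Real.exp (-s^2 - c/s^2)) (Ioi 0) :=
      (intE hc).const_mul (1/2)
    have i2 := intCDivE hc
    have i12 : IntegrableOn (fun s : ℝ => 1/2 * Real.exp (-s^2 - c/s^2)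
        + c/s^2 * Real.exp (-s^2 - c/s^2)) (Ioi 0) := i1.add i2
    rw [heq, integral_add hibpint i12, integral_add i1 i2, ibp hc,
      integral_const_mul, zero_add]
  rcases eq_or_lt_of_le hc with hc0 | hcpos
  · -- c = 0
    subst hc0
    have hz : ∀ s : ℝ, (0:ℝ)/s^2 * Real.exp (-s^2 - 0/s^2) = 0 := by
      intro s; simp
    simp only [zero_div, sub_zero, zero_mul, integral_zero, add_zero, Real.sqrt_zero,
      mul_zero, neg_zero, Real.exp_zero] at step1 ⊢
    rw [step1]
    have : ∫ s in Ioi (0:ℝ), Real.exp (-s^2) = Real.sqrt (π/1) / 2 := by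
      rw [← integral_gaussian_Ioi 1]
      apply setIntegral_congr_fun measurableSet_Ioi
      intro x _; norm_num
    rw [this, div_one]
    ring
  · -- c > 0
    set k := Real.sqrt c with hkdef
    have hk : 0 < k := Real.sqrt_pos.2 hcpos
    have hk2 : k^2 = c := Real.sq_sqrt hc
    have hkne : k ≠ 0 := ne_of_gt hk
    -- Glasser rewritten
    have hgl : (∫ s in Ioi (0:ℝ), Real.exp (-s^2 - c/s^2))
        + ∫ s in Ioi (0:ℝ), (k/s^2) * Real.exp (-s^2 - c/s^2)
        = Real.sqrt π * Real.exp (-2*k) := by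
      have h1 := glasser hk
      have h2 : ∀ x ∈ Ioi (0:ℝ), (1 + k/x^2) * Real.exp (-(x - k/x)^2)
          = Real.exp (2*k) * (Real.exp (-x^2 - c/x^2) + (k/x^2) * Real.exp (-x^2 - c/x^2)) := by
        intro x hx
        have hx0 : (0:ℝ) < x := hx
        have he : -(x - k/x)^2 = 2*k + (-x^2 - c/x^2) := by
          rw [← hk2]; field_simp; ring
        rw [he, Real.exp_add]
        ring
      rw [setIntegral_congr_fun measurableSet_Ioi h2] at h1
      rw [integral_const_mul,
        integral_add (intE hc) ?hint] at h1
      case hint =>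
        have h3 : (fun s : ℝ => (k/s^2) * Real.exp (-s^2 - c/s^2))
            = fun s : ℝ => (1/k) * (c/s^2 * Real.exp (-s^2 - c/s^2)) := by
          funext s
          rw [← hk2, eq_comm, one_div, inv_mul_eq_iff_eq_mul₀ hkne]
          ring
        rw [h3]
        exact (intCDivE hc).const_mul _
      have hrw : Real.sqrt π = Real.exp (2*k) * (Real.sqrt π * Real.exp (-2*k)) := by
        rw [← mul_assoc, mul_comm (Real.exp (2*k)), mul_assoc, ← Real.exp_add]
        simp
      rw [hrw] at h1
      exact mul_left_cancel₀ (ne_of_gt (Real.exp_pos _)) h1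
    -- reflection rewritten
    have hrefl : (∫ s in Ioi (0:ℝ), Real.exp (-s^2 - c/s^2))
        = ∫ s in Ioi (0:ℝ), (k/s^2) * Real.exp (-s^2 - c/s^2) := by
      have := reflect hk
      rw [hk2] at this
      exact this
    have hA : (∫ s in Ioi (0:ℝ), Real.exp (-s^2 - c/s^2))
        = Real.sqrt π * Real.exp (-2*k) / 2 := by linarith
    have hB : (∫ s in Ioi (0:ℝ), c/s^2 * Real.exp (-s^2 - c/s^2))
        = k * (Real.sqrt π * Real.exp (-2*k) / 2) := by
      have h3 : (fun s : ℝ => c/s^2 * Real.exp (-s^2 - c/s^2))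
          = fun s : ℝ => k * ((k/s^2) * Real.exp (-s^2 - c/s^2)) := by
        funext s; rw [← hk2]; ring
      rw [h3, integral_const_mul, ← hrefl, hA]
    rw [step1, hA, hB]
    ring
theorem stmt_0 (a b : ℝ) (ha : 0 < a) (hb : 0 ≤ b) :
    ∫ y in Set.Ioi (0 : ℝ), y ^ (-(5 : ℝ) / 2) * Real.exp (-a / y - b * y) =
      Real.Gamma (3 / 2) * a ^ (-(3 : ℝ) / 2) *
        (1 + 2 * Real.sqrt (a * b)) * Real.exp (-2 * Real.sqrt (a * b)) := by
  have hane : a ≠ 0 := ne_of_gt ha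
  set f : ℝ → ℝ := fun s => a / s^2 with hfdef
  have himg : f '' Ioi 0 = Ioi 0 := by
    ext t
    constructor
    · rintro ⟨s, hs, rfl⟩
      exact div_pos ha (pow_pos hs 2)
    · intro ht
      have ht0 : (0:ℝ) < t := ht
      refine ⟨Real.sqrt (a/t), Real.sqrt_pos.2 (div_pos ha ht0), ?_⟩
      show a / (Real.sqrt (a/t))^2 = t
      rw [Real.sq_sqrt (le_of_lt (div_pos ha ht0))]
      field_simp
  have hderiv : ∀ x ∈ Ioi (0:ℝ), HasDerivWithinAt f (-(2*a/x^3)) (Ioi 0) x := by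
    intro x hx
    have hx0 : (0:ℝ) < x := hx
    have hx2 : (x:ℝ)^2 ≠ 0 := by positivity
    have hpow : HasDerivAt (fun s : ℝ => s^2) (2*x) x := by
      simpa using hasDerivAt_pow 2 x
    have h := (hasDerivAt_const x a).div hpow hx2
    have h2 : HasDerivAt f (-(2*a/x^3)) x := by
      refine h.congr_deriv ?_
      field_simp
      ring
    exact h2.hasDerivWithinAt
  have hinj : InjOn f (Ioi 0) := by
    intro x hx y hy h
    have hx0 : (0:ℝ) < x := hx
    have hy0 : (0:ℝ) < y := hy
    simp only [hfdef] at h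
    rw [div_eq_div_iff (by positivity) (by positivity)] at h
    have h2 : x^2 = y^2 := by
      have := mul_left_cancel₀ hane h
      linarith [this]
    calc x = Real.sqrt (x^2) := (Real.sqrt_sq hx0.le).symm
      _ = Real.sqrt (y^2) := by rw [h2]
      _ = y := Real.sqrt_sq hy0.le
  have key := integral_image_eq_integral_abs_deriv_smul measurableSet_Ioi hderiv hinj
    (fun y => y ^ (-(5:ℝ)/2) * Real.exp (-a / y - b * y))
  rw [himg] at key
  rw [key]
  have hptwise : ∀ s ∈ Ioi (0:ℝ), |(-(2*a/s^3))| • ((f s) ^ (-(5:ℝ)/2) * Real.exp (-a / (f s) - b * (f s)))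
      = 2 * a ^ (-(3:ℝ)/2) * (s^2 * Real.exp (-s^2 - (a*b)/s^2)) := by
    intro s hs
    have hs0 : (0:ℝ) < s := hs
    have hfs : f s = a / s^2 := rfl
    have h1 : -a / (f s) - b * (f s) = -s^2 - (a*b)/s^2 := by
      rw [hfs]
      field_simp
    have h2 : (f s) ^ (-(5:ℝ)/2) = a ^ (-(5:ℝ)/2) * s^5 := by
      rw [hfs, Real.div_rpow ha.le (sq_nonneg s)]
      rw [← Real.rpow_natCast s 2, ← Real.rpow_mul hs0.le]
      norm_num
    have h3 : a ^ (-(3:ℝ)/2) = a * a ^ (-(5:ℝ)/2) := by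
      rw [show (-(3:ℝ)/2) = 1 + (-(5:ℝ)/2) by norm_num, Real.rpow_add ha, Real.rpow_one]
    rw [smul_eq_mul, h1, h2, abs_neg, abs_of_pos (by positivity), h3]
    field_simp
  rw [setIntegral_congr_fun measurableSet_Ioi hptwise, integral_const_mul,
    keylem (mul_nonneg ha.le hb)]
  have hg : Real.Gamma (3/2) = Real.sqrt π / 2 := by
    rw [show (3/2 : ℝ) = 1/2 + 1 by norm_num, Real.Gamma_add_one (by norm_num),
      Real.Gamma_one_half_eq]
    ring
  rw [hg]
  ring
end

section
/- For every real number d > 0 and every real number t, setting β = 1/(4d²), the Laplace transform of the inverse (reciprocal) gamma density with shape 3/2 and rate β evaluated at t² satisfies ∫₀^∞ exp(-t²·y) · (β^{3/2}/Γ(3/2)) · y^{-5/2} · exp(-β/y) dy = (1 + |t|/d) · exp(-|t|/d). -/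
open Real MeasureTheory Set Filter Topology

noncomputable def Phi (x : ℝ) : ℝ := ∫ r in (0:ℝ)..x, Real.exp (-r ^ 2)

lemma Phi_hasDerivAt (x : ℝ) : HasDerivAt Phi (Real.exp (-x ^ 2)) x := by
  have hc : Continuous fun r : ℝ => Real.exp (-r ^ 2) := by continuity
  exact (hc.integral_hasStrictDerivAt 0 x).hasDerivAt

lemma Phi_zero : Phi 0 = 0 := intervalIntegral.integral_same

lemma Phi_tendsto_atTop : Tendsto Phi atTop (𝓝 (Real.sqrt π / 2)) := by
  have hint : IntegrableOn (fun r : ℝ => Real.exp (-r ^ 2)) (Ioi 0) := by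
    have := (integrable_exp_neg_mul_sq (one_pos)).integrableOn (s := Ioi (0:ℝ))
    simpa using this
  have h := intervalIntegral_tendsto_integral_Ioi 0 hint tendsto_id
  have heq : (∫ x in Ioi (0:ℝ), Real.exp (-x ^ 2)) = Real.sqrt π / 2 := by
    have := integral_gaussian_Ioi 1
    simpa using this
  rw [heq] at h
  exact h

lemma Phi_neg (x : ℝ) : Phi (-x) = -Phi x := by
  have h := intervalIntegral.integral_comp_neg (a := 0) (b := x)
    (fun r : ℝ => Real.exp (-r ^ 2))
  simp only [neg_sq, neg_zero] at h
  unfold Phi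
  rw [h]
  exact intervalIntegral.integral_symm _ _

lemma Phi_tendsto_atBot : Tendsto Phi atBot (𝓝 (-(Real.sqrt π / 2))) := by
  have h : Tendsto (fun x => -Phi (-x)) atBot (𝓝 (-(Real.sqrt π / 2))) :=
    (Phi_tendsto_atTop.comp tendsto_neg_atBot_atTop).neg
  exact h.congr fun x => by rw [Phi_neg, neg_neg]

lemma tendsto_sqrt_atTop' : Tendsto Real.sqrt atTop atTop := by
  refine tendsto_atTop.mpr fun b => ?_
  filter_upwards [eventually_ge_atTop ((max b 0) ^ 2)] with x hx
  calc b ≤ max b 0 := le_max_left _ _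
    _ = Real.sqrt ((max b 0) ^ 2) := (Real.sqrt_sq (le_max_right _ _)).symm
    _ ≤ Real.sqrt x := Real.sqrt_le_sqrt hx

lemma ftc_Ioi_zero {F G : ℝ → ℝ} {M m : ℝ}
    (hderiv : ∀ y ∈ Ioi (0:ℝ), HasDerivAt F (G y) y)
    (hpos : ∀ y ∈ Ioi (0:ℝ), 0 ≤ G y)
    (htop : Tendsto F atTop (𝓝 M))
    (hbot : Tendsto F (𝓝[>] (0:ℝ)) (𝓝 m)) :
    ∫ y in Ioi (0:ℝ), G y = M - m := by
  set a : ℕ → ℝ := fun n => 1 / (n + 1) with ha_def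
  have ha_pos : ∀ n, (0:ℝ) < a n := fun n => by positivity
  have ha0 : Tendsto a atTop (𝓝 0) := tendsto_one_div_add_atTop_nhds_zero_nat
  have haW : Tendsto a atTop (𝓝[>] (0:ℝ)) :=
    tendsto_nhdsWithin_of_tendsto_nhds_of_eventually_within _ ha0
      (Eventually.of_forall fun n => ha_pos n)
  have key : ∀ n, (∫ y in Ioi (a n), G y) = M - F (a n) := fun n =>
    integral_Ioi_of_hasDerivAt_of_nonneg
      ((hderiv _ (ha_pos n)).continuousAt.continuousWithinAt)
      (fun x hx => hderiv x (lt_trans (ha_pos n) hx))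
      (fun x hx => hpos x (lt_trans (ha_pos n) hx)) htop
  have keyInt : ∀ n, IntegrableOn G (Ioi (a n)) := fun n =>
    integrableOn_Ioi_deriv_of_nonneg
      ((hderiv _ (ha_pos n)).continuousAt.continuousWithinAt)
      (fun x hx => hderiv x (lt_trans (ha_pos n) hx))
      (fun x hx => hpos x (lt_trans (ha_pos n) hx)) htop
  have hcover : AECover (volume.restrict (Ioi (0:ℝ))) atTop fun n => Ioi (a n) := by
    constructor
    · refine (ae_restrict_iff' measurableSet_Ioi).2 (ae_of_all _ fun x hx => ?_)
      filter_upwards [ha0.eventually_lt_const hx] with n hn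
      exact hn
    · exact fun n => measurableSet_Ioi
  have hsub : ∀ n, Ioi (a n) ∩ Ioi (0:ℝ) = Ioi (a n) := fun n =>
    inter_eq_self_of_subset_left (Ioi_subset_Ioi (ha_pos n).le)
  have hInt' : ∀ n, IntegrableOn G (Ioi (a n)) (volume.restrict (Ioi 0)) := fun n => by
    rw [IntegrableOn, Measure.restrict_restrict measurableSet_Ioi, hsub n]
    exact keyInt n
  have hIeq : ∀ n, (∫ y in Ioi (a n), G y ∂(volume.restrict (Ioi 0))) = M - F (a n) := fun n => by
    rw [Measure.restrict_restrict measurableSet_Ioi, hsub n]; exact key n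
  have htend : Tendsto (fun n => ∫ y in Ioi (a n), G y ∂(volume.restrict (Ioi 0))) atTop
      (𝓝 (M - m)) := by
    simp only [hIeq]
    exact tendsto_const_nhds.sub (hbot.comp haW)
  have := hcover.integral_eq_of_tendsto_of_nonneg_ae (M - m)
    ((ae_restrict_iff' measurableSet_Ioi).2 (ae_of_all _ hpos)) hInt' htend
  simpa using this

lemma core (s β : ℝ) (hs : 0 ≤ s) (hβ : 0 < β) :
    ∫ y in Ioi (0:ℝ), Real.exp (-(s^2) * y) * y ^ (-(5:ℝ)/2) * Real.exp (-β/y)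
      = Real.sqrt π * Real.exp (-(2 * s * Real.sqrt β)) *
        (s / β + 1 / (2 * β * Real.sqrt β)) := by
  set c : ℝ := Real.sqrt β with hc_def
  have hc : 0 < c := Real.sqrt_pos.mpr hβ
  have hc2 : c ^ 2 = β := Real.sq_sqrt hβ.le
  set P : ℝ := Real.exp (-(2 * s * c)) * (s / β + 1 / (2 * β * c)) with hP
  set Q : ℝ := Real.exp (2 * s * c) * (s / β - 1 / (2 * β * c)) with hQ
  set F : ℝ → ℝ := fun x => 1/β * (Real.sqrt x)⁻¹ * Real.exp (-(s^2*x) - β/x) +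
      (P * Phi (s * Real.sqrt x - c / Real.sqrt x) +
       Q * Phi (s * Real.sqrt x + c / Real.sqrt x)) with hF
  set G : ℝ → ℝ := fun y => Real.exp (-(s^2) * y) * y ^ (-(5:ℝ)/2) * Real.exp (-β/y) with hG
  -- derivative
  have hderiv : ∀ y ∈ Ioi (0:ℝ), HasDerivAt F (G y) y := by
    intro y hy
    rw [mem_Ioi] at hy
    set w : ℝ := Real.sqrt y with hw_def
    have hw : 0 < w := Real.sqrt_pos.mpr hy
    have hw2 : w ^ 2 = y := Real.sq_sqrt hy.le
    have h1 : HasDerivAt Real.sqrt (1/(2*w)) y := Real.hasDerivAt_sqrt hy.ne'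
    have hinv : HasDerivAt (fun x => (Real.sqrt x)⁻¹) (-(1/(2*w)) / w^2) y := h1.inv hw.ne'
    have hid : HasDerivAt (fun x : ℝ => -(s^2*x) - β/x) (-(s^2) - β * -(y^2)⁻¹) y := by
      have h2 : HasDerivAt (fun x : ℝ => -(s^2*x)) (-(s^2)) y := by
        have := ((hasDerivAt_id' y).const_mul (s^2)).neg; simp only [mul_one] at this; exact this
      have h3 : HasDerivAt (fun x : ℝ => β/x) (β * -(y^2)⁻¹) y := by
        simpa [div_eq_mul_inv] using (hasDerivAt_inv hy.ne').const_mul β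
      exact h2.sub h3
    have hE : HasDerivAt (fun x => Real.exp (-(s^2*x) - β/x))
        (Real.exp (-(s^2*y) - β/y) * (-(s^2) - β * -(y^2)⁻¹)) y := hid.exp
    have hcw : HasDerivAt (fun x => c / Real.sqrt x) (c * (-(1/(2*w)) / w^2)) y := by
      simpa [div_eq_mul_inv] using hinv.const_mul c
    have hsw : HasDerivAt (fun x => s * Real.sqrt x) (s * (1/(2*w))) y := h1.const_mul s
    have hu := hsw.sub hcw
    have hv := hsw.add hcw
    have hPu : HasDerivAt (fun x => Phi (s * Real.sqrt x - c / Real.sqrt x))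
        (Real.exp (-(s * w - c / w)^2) * (s * (1/(2*w)) - c * (-(1/(2*w)) / w^2))) y := by
      simpa [Function.comp_def] using (Phi_hasDerivAt (s * w - c / w)).comp y hu
    have hPv : HasDerivAt (fun x => Phi (s * Real.sqrt x + c / Real.sqrt x))
        (Real.exp (-(s * w + c / w)^2) * (s * (1/(2*w)) + c * (-(1/(2*w)) / w^2))) y := by
      simpa [Function.comp_def] using (Phi_hasDerivAt (s * w + c / w)).comp y hv
    have Hd := ((hinv.const_mul (1/β)).mul hE).add ((hPu.const_mul P).add (hPv.const_mul Q))
    convert Hd using 1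
    case e'_4 => rfl
    case e'_5 => rfl
    case e'_8 => rfl
    -- exponent identities
    have hEu : Real.exp (-(s * w - c / w)^2)
        = Real.exp (-(s^2*y) - β/y) * Real.exp (2*s*c) := by
      rw [← Real.exp_add]
      congr 1
      rw [← hw2, ← hc2]
      field_simp
      ring
    have hEv : Real.exp (-(s * w + c / w)^2)
        = Real.exp (-(s^2*y) - β/y) * (Real.exp (2*s*c))⁻¹ := by
      rw [← Real.exp_neg, ← Real.exp_add]
      congr 1
      rw [← hw2, ← hc2]
      field_simp
      ring
    have hy52 : y ^ (-(5:ℝ)/2) = (w ^ 5)⁻¹ := by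
      rw [hw_def, Real.sqrt_eq_rpow, ← Real.rpow_natCast (y ^ ((1:ℝ)/2)) 5,
        ← Real.rpow_mul hy.le, ← Real.rpow_neg hy.le]
      norm_num
    have hGE : G y = Real.exp (-(s^2*y) - β/y) * (w ^ 5)⁻¹ := by
      rw [hG]
      simp only
      rw [hy52, show Real.exp (-(s^2) * y) * (w^5)⁻¹ * Real.exp (-β/y)
        = Real.exp (-(s^2) * y) * Real.exp (-β/y) * (w^5)⁻¹ by ring, ← Real.exp_add]
      ring_nf
    rw [hGE, hEu, hEv, hP, hQ, Real.exp_neg]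
    set e : ℝ := Real.exp (2*s*c) with he_def
    have he : 0 < e := Real.exp_pos _
    set EE : ℝ := Real.exp (-(s^2*y) - β/y) with hEE_def
    rw [← hw_def, ← hw2, ← hc2]
    field_simp
    ring
  have hpos : ∀ y ∈ Ioi (0:ℝ), 0 ≤ G y := by
    intro y hy
    rw [mem_Ioi] at hy
    exact mul_nonneg (mul_nonneg (Real.exp_pos _).le (Real.rpow_nonneg hy.le _))
      (Real.exp_pos _).le
  -- first term tends to 0 at +∞ and at 0⁺
  have hterm1_top : Tendsto (fun x => 1/β * (Real.sqrt x)⁻¹ * Real.exp (-(s^2*x) - β/x))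
      atTop (𝓝 0) := by
    have hg : Tendsto (fun x : ℝ => 1/β * (Real.sqrt x)⁻¹) atTop (𝓝 0) := by
      have := (tendsto_sqrt_atTop'.inv_tendsto_atTop).const_mul (1/β)
      simpa using this
    apply squeeze_zero' (g := fun x : ℝ => 1/β * (Real.sqrt x)⁻¹)
    · filter_upwards with x
      positivity
    · filter_upwards [eventually_gt_atTop (0:ℝ)] with x hx
      have h1 : Real.exp (-(s^2*x) - β/x) ≤ 1 := by
        rw [← Real.exp_zero]
        apply Real.exp_le_exp.mpr
        have : 0 ≤ s^2*x := by positivity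
        have : 0 ≤ β/x := by positivity
        linarith
      calc 1/β * (Real.sqrt x)⁻¹ * Real.exp (-(s^2*x) - β/x)
          ≤ 1/β * (Real.sqrt x)⁻¹ * 1 := by
            apply mul_le_mul_of_nonneg_left h1
            positivity
        _ = 1/β * (Real.sqrt x)⁻¹ := by ring
    · exact hg
  have hterm1_bot : Tendsto (fun x => 1/β * (Real.sqrt x)⁻¹ * Real.exp (-(s^2*x) - β/x))
      (𝓝[>] (0:ℝ)) (𝓝 0) := by
    have hout : Tendsto (fun x : ℝ => Real.sqrt x * Real.exp (-(β * x))) atTop (𝓝 0) := by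
      have := tendsto_rpow_mul_exp_neg_mul_atTop_nhds_zero (1/2) β hβ
      apply this.congr'
      filter_upwards [eventually_ge_atTop (0:ℝ)] with x hx
      rw [Real.sqrt_eq_rpow, neg_mul]
    have hcomp : Tendsto (fun y : ℝ => Real.sqrt y⁻¹ * Real.exp (-(β * y⁻¹)))
        (𝓝[>] (0:ℝ)) (𝓝 0) := hout.comp tendsto_inv_nhdsGT_zero
    apply squeeze_zero' (g := fun y : ℝ => 1/β * (Real.sqrt y⁻¹ * Real.exp (-(β * y⁻¹))))
    · filter_upwards with x
      positivity
    · filter_upwards [self_mem_nhdsWithin] with x hx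
      rw [mem_Ioi] at hx
      have h1 : Real.exp (-(s^2*x) - β/x) ≤ Real.exp (-(β * x⁻¹)) := by
        apply Real.exp_le_exp.mpr
        rw [div_eq_mul_inv]
        have : 0 ≤ s^2*x := by positivity
        linarith
      have h2 : (Real.sqrt x)⁻¹ = Real.sqrt x⁻¹ := (Real.sqrt_inv x).symm
      rw [h2]
      calc 1/β * Real.sqrt x⁻¹ * Real.exp (-(s^2*x) - β/x) ≤
          1/β * Real.sqrt x⁻¹ * Real.exp (-(β * x⁻¹)) := by
            apply mul_le_mul_of_nonneg_left h1
            positivity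
        _ = 1/β * (Real.sqrt x⁻¹ * Real.exp (-(β * x⁻¹))) := by ring
    · simpa using hcomp.const_mul (1/β)
  -- limits of u and v at 0⁺
  have hsq0 : Tendsto (fun y : ℝ => Real.sqrt y) (𝓝[>] (0:ℝ)) (𝓝[>] (0:ℝ)) := by
    apply tendsto_nhdsWithin_of_tendsto_nhds_of_eventually_within
    · have : Tendsto (fun y : ℝ => Real.sqrt y) (𝓝 (0:ℝ)) (𝓝 (Real.sqrt 0)) :=
        continuous_sqrt.tendsto 0
      simpa using this.mono_left nhdsWithin_le_nhds
    · filter_upwards [self_mem_nhdsWithin] with x hx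
      exact Real.sqrt_pos.mpr hx
  have hsq0' : Tendsto (fun y : ℝ => Real.sqrt y) (𝓝[>] (0:ℝ)) (𝓝 0) :=
    hsq0.mono_right nhdsWithin_le_nhds
  have hinv0 : Tendsto (fun y : ℝ => (Real.sqrt y)⁻¹) (𝓝[>] (0:ℝ)) atTop :=
    tendsto_inv_nhdsGT_zero.comp hsq0
  have hu_bot : Tendsto (fun y : ℝ => s * Real.sqrt y - c / Real.sqrt y) (𝓝[>] (0:ℝ)) atBot := by
    have h1 : Tendsto (fun y : ℝ => s * Real.sqrt y) (𝓝[>] (0:ℝ)) (𝓝 (s * 0)) :=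
      hsq0'.const_mul s
    have h2 : Tendsto (fun y : ℝ => -(c * (Real.sqrt y)⁻¹)) (𝓝[>] (0:ℝ)) atBot :=
      tendsto_neg_atTop_atBot.comp (hinv0.const_mul_atTop hc)
    have h3 := Filter.Tendsto.add_atBot h1 h2
    apply h3.congr
    intro y
    rw [div_eq_mul_inv]
    ring
  have hv_top : Tendsto (fun y : ℝ => s * Real.sqrt y + c / Real.sqrt y) (𝓝[>] (0:ℝ)) atTop := by
    have h1 : Tendsto (fun y : ℝ => s * Real.sqrt y) (𝓝[>] (0:ℝ)) (𝓝 (s * 0)) :=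
      hsq0'.const_mul s
    have h2 : Tendsto (fun y : ℝ => c * (Real.sqrt y)⁻¹) (𝓝[>] (0:ℝ)) atTop :=
      hinv0.const_mul_atTop hc
    have h3 := Filter.Tendsto.add_atTop h1 h2
    apply h3.congr
    intro y
    rw [div_eq_mul_inv]
  have hbot : Tendsto F (𝓝[>] (0:ℝ)) (𝓝 (0 + (P * -(Real.sqrt π / 2) +
      Q * (Real.sqrt π / 2)))) := by
    apply hterm1_bot.add
    exact ((Phi_tendsto_atBot.comp hu_bot).const_mul P).add
      ((Phi_tendsto_atTop.comp hv_top).const_mul Q)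
  -- case split for the limit at infinity
  rcases hs.eq_or_lt with hs0 | hs'
  · -- s = 0
    subst hs0
    have hu_top : Tendsto (fun y : ℝ => (0:ℝ) * Real.sqrt y - c / Real.sqrt y) atTop (𝓝 0) := by
      have h2 : Tendsto (fun y : ℝ => c * (Real.sqrt y)⁻¹) atTop (𝓝 (c * 0)) :=
        (tendsto_sqrt_atTop'.inv_tendsto_atTop).const_mul c
      have := (tendsto_const_nhds (x := (0:ℝ)) (f := atTop)).sub h2
      simp only [mul_zero, sub_zero, zero_sub] at this ⊢
      apply this.congr
      intro y
      rw [div_eq_mul_inv]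
      ring
    have hv_top' : Tendsto (fun y : ℝ => (0:ℝ) * Real.sqrt y + c / Real.sqrt y) atTop (𝓝 0) := by
      have h2 : Tendsto (fun y : ℝ => c * (Real.sqrt y)⁻¹) atTop (𝓝 (c * 0)) :=
        (tendsto_sqrt_atTop'.inv_tendsto_atTop).const_mul c
      have := (tendsto_const_nhds (x := (0:ℝ)) (f := atTop)).add h2
      simp only [mul_zero, add_zero, zero_add] at this ⊢
      apply this.congr
      intro y
      rw [div_eq_mul_inv]
      ring
    have hPhi0 : Tendsto Phi (𝓝 (0:ℝ)) (𝓝 (Phi 0)) := (Phi_hasDerivAt 0).continuousAt.tendsto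
    have htop : Tendsto F atTop (𝓝 (0 + (P * Phi 0 + Q * Phi 0))) := by
      apply hterm1_top.add
      exact ((hPhi0.comp hu_top).const_mul P).add ((hPhi0.comp hv_top').const_mul Q)
    rw [ftc_Ioi_zero hderiv hpos htop hbot]
    rw [hP, hQ, Phi_zero]
    have hβ' : β ≠ 0 := hβ.ne'
    have hc' : c ≠ 0 := hc.ne'
    norm_num
    field_simp
    ring
  · -- s > 0
    have hu_top : Tendsto (fun y : ℝ => s * Real.sqrt y - c / Real.sqrt y) atTop atTop := by
      have h1 : Tendsto (fun y : ℝ => s * Real.sqrt y) atTop atTop :=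
        tendsto_sqrt_atTop'.const_mul_atTop hs'
      have h2 : Tendsto (fun y : ℝ => -(c * (Real.sqrt y)⁻¹)) atTop (𝓝 (-(c * 0))) :=
        ((tendsto_sqrt_atTop'.inv_tendsto_atTop).const_mul c).neg
      have h3 := Filter.Tendsto.atTop_add h1 h2
      apply h3.congr
      intro y
      rw [div_eq_mul_inv]
      ring
    have hv_top' : Tendsto (fun y : ℝ => s * Real.sqrt y + c / Real.sqrt y) atTop atTop := by
      have h1 : Tendsto (fun y : ℝ => s * Real.sqrt y) atTop atTop :=
        tendsto_sqrt_atTop'.const_mul_atTop hs'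
      have h2 : Tendsto (fun y : ℝ => c * (Real.sqrt y)⁻¹) atTop (𝓝 (c * 0)) :=
        (tendsto_sqrt_atTop'.inv_tendsto_atTop).const_mul c
      have h3 := Filter.Tendsto.atTop_add h1 h2
      apply h3.congr
      intro y
      rw [div_eq_mul_inv]
    have htop : Tendsto F atTop (𝓝 (0 + (P * (Real.sqrt π / 2) + Q * (Real.sqrt π / 2)))) := by
      apply hterm1_top.add
      exact ((Phi_tendsto_atTop.comp hu_top).const_mul P).add
        ((Phi_tendsto_atTop.comp hv_top').const_mul Q)
    rw [ftc_Ioi_zero hderiv hpos htop hbot]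
    rw [hP]
    ring

theorem stmt_1 (d : ℝ) (hd : 0 < d) (t : ℝ) (β : ℝ) (hβ : β = 1 / (4 * d ^ 2)) :
    ∫ y in Set.Ioi (0 : ℝ),
        Real.exp (-t ^ 2 * y) * (β ^ ((3 : ℝ) / 2) / Real.Gamma (3 / 2)) *
          y ^ (-(5 : ℝ) / 2) * Real.exp (-β / y) =
      (1 + |t| / d) * Real.exp (-|t| / d) := by
  have hβpos : 0 < β := by rw [hβ]; positivity
  have hd' : d ≠ 0 := hd.ne'
  have hsb : Real.sqrt β = 1 / (2 * d) := by
    rw [hβ, show (1:ℝ)/(4*d^2) = (1/(2*d))^2 by field_simp; ring]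
    exact Real.sqrt_sq (by positivity)
  have hΓ : Real.Gamma (3/2 : ℝ) = Real.sqrt π / 2 := by
    rw [show (3/2 : ℝ) = 1/2 + 1 by norm_num, Real.Gamma_add_one (by norm_num),
      Real.Gamma_one_half_eq]
    ring
  have hrpow : β ^ ((3:ℝ)/2) = β * Real.sqrt β := by
    rw [show (3:ℝ)/2 = 1 + 1/2 by norm_num, Real.rpow_add hβpos, Real.rpow_one,
      Real.sqrt_eq_rpow]
  have hptw : ∀ y : ℝ, Real.exp (-t^2*y) * (β ^ ((3:ℝ)/2) / Real.Gamma (3/2)) *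
      y ^ (-(5:ℝ)/2) * Real.exp (-β/y) = (β ^ ((3:ℝ)/2) / Real.Gamma (3/2)) *
      (Real.exp (-(|t|^2) * y) * y ^ (-(5:ℝ)/2) * Real.exp (-β/y)) := fun y => by
    rw [sq_abs]; ring
  simp only [hptw]
  rw [MeasureTheory.integral_const_mul, core |t| β (abs_nonneg t) hβpos]
  have hexp : 2 * |t| * Real.sqrt β = |t| / d := by
    rw [hsb]; field_simp
  rw [hexp, hΓ, hrpow, hsb]
  have hπ : Real.sqrt π ≠ 0 := by
    have := Real.pi_pos
    positivity
  rw [hβ]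
  field_simp
  ring
end

section
/- For all real numbers d > 0, c ≥ 0, and t, the ratio (∫₀^∞ exp(-t²·y) · y^{-5/2} · exp(-1/(4d²·y) - c²·y/2) dy) / (∫₀^∞ y^{-5/2} · exp(-1/(4d²·y) - c²·y/2) dy) equals ((d + √(t² + c²/2)) / (d + c/√2)) · exp(-√(t² + c²/2)/d) · exp((c/√2)/d). Equivalently, the Laplace transform at t² of a GIG(-3/2, 1/(√2·d), c)-distributed random variable Y, whose density is proportional to y^{-5/2} · exp(-1/(4d²·y) - c²·y/2) on (0, ∞), is E[exp(-t²·Y)] = ((d + √(t² + c²/2)) / (d + c/√2)) · exp(-√(t² + c²/2)/d) · exp((c/√2)/d). -/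
open Real MeasureTheory Filter Set Topology

noncomputable def gigE (x : ℝ) : ℝ := ∫ t in (0:ℝ)..x, Real.exp (-t^2)

lemma gig_cont : Continuous fun t : ℝ => Real.exp (-t^2) := by continuity

lemma gig_integrable : Integrable (fun t : ℝ => Real.exp (-t^2)) := by
  have h := integrable_exp_neg_mul_sq (b := (1:ℝ)) one_pos
  simpa using h

lemma gigE_hasDerivAt (x : ℝ) : HasDerivAt gigE (Real.exp (-x^2)) x :=
  intervalIntegral.integral_hasDerivAt_right (gig_cont.intervalIntegrable _ _)
    (gig_cont.stronglyMeasurableAtFilter _ _) gig_cont.continuousAt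

lemma gigE_cont : Continuous gigE :=
  continuous_iff_continuousAt.2 fun x => (gigE_hasDerivAt x).continuousAt

lemma gigE_zero : gigE 0 = 0 := intervalIntegral.integral_same

lemma gig_Ioi : ∫ t in Set.Ioi (0:ℝ), Real.exp (-t^2) = Real.sqrt π / 2 := by
  have h := integral_gaussian_Ioi 1
  simpa using h

lemma gigE_atTop : Tendsto gigE atTop (𝓝 (Real.sqrt π / 2)) := by
  have h := intervalIntegral_tendsto_integral_Ioi 0 gig_integrable.integrableOn tendsto_id
  rw [gig_Ioi] at h
  exact h

lemma gig_Iic : ∫ t in Set.Iic (0:ℝ), Real.exp (-t^2) = Real.sqrt π / 2 := by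
  have h : ∫ t in Set.Ioi (0:ℝ), Real.exp (-(-t)^2) = ∫ t in Set.Iic (-(0:ℝ)), Real.exp (-t^2) :=
    integral_comp_neg_Ioi (c := 0) (f := fun t => Real.exp (-t^2))
  simp only [neg_neg, neg_zero, neg_sq] at h
  rw [← h, gig_Ioi]

lemma gigE_atBot : Tendsto gigE atBot (𝓝 (-(Real.sqrt π / 2))) := by
  have h := intervalIntegral_tendsto_integral_Iic 0 gig_integrable.integrableOn tendsto_id
  rw [gig_Iic] at h
  have : gigE = fun x => -(∫ t in x..(0:ℝ), Real.exp (-t^2)) := by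
    funext x
    rw [gigE, intervalIntegral.integral_symm]
  rw [this]
  exact h.neg

lemma gig_key (α s : ℝ) (hα : 0 < α) (hs : 0 ≤ s) :
    ∫ y in Set.Ioi (0:ℝ), y ^ (-(5:ℝ)/2) * Real.exp (-α^2 / y - s^2 * y)
      = Real.sqrt π / α^2 * (s + 1/(2*α)) * Real.exp (-(2*α*s)) := by
  have hα' : α ≠ 0 := hα.ne'
  set L : ℝ := Real.sqrt π / 2 with hL
  set C₂ : ℝ := Real.exp (-(2*α*s)) * (-s/α^2 - 1/(2*α^3)) with hC2
  set C₃ : ℝ := Real.exp (2*α*s) * (s/α^2 - 1/(2*α^3)) with hC3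
  set G : ℝ → ℝ := fun z =>
    (1/α^2) * (Real.exp (-α^2/z - s^2*z) * (Real.sqrt z)⁻¹)
    + C₂ * gigE (α * (Real.sqrt z)⁻¹ - s * Real.sqrt z)
    + C₃ * gigE (α * (Real.sqrt z)⁻¹ + s * Real.sqrt z) with hG
  set F : ℝ → ℝ := fun z => if z ≤ 0 then (C₂ + C₃) * L else G z with hF
  have hFG : ∀ z : ℝ, 0 < z → F z = G z := by
    intro z hz
    simp [hF, not_le.2 hz]
  -- derivative
  have hderiv : ∀ y ∈ Set.Ioi (0:ℝ),
      HasDerivAt F (y ^ (-(5:ℝ)/2) * Real.exp (-α^2/y - s^2*y)) y := by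
    intro y hy
    have hy0 : (0:ℝ) < y := hy
    have hy' : y ≠ 0 := hy0.ne'
    set w := Real.sqrt y with hwdef
    have hw : 0 < w := Real.sqrt_pos.2 hy0
    have hw' : w ≠ 0 := hw.ne'
    have hwy : w^2 = y := Real.sq_sqrt hy0.le
    have hsq : HasDerivAt Real.sqrt (1/(2*w)) y := by
      simpa [hwdef] using Real.hasDerivAt_sqrt hy'
    have hinvsq : HasDerivAt (fun z => (Real.sqrt z)⁻¹) (-(1/(2*w)) / w^2) y := by
      exact hsq.inv hw'
    have h1 : HasDerivAt (fun z : ℝ => -α^2/z) (α^2/y^2) y := by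
      have h := (hasDerivAt_inv hy').const_mul (-α^2)
      have e : -α^2 * -(y^2)⁻¹ = α^2/y^2 := by field_simp
      rw [e] at h
      simpa [div_eq_mul_inv] using h
    have h2 : HasDerivAt (fun z : ℝ => s^2*z) (s^2) y := by
      simpa using (hasDerivAt_id y).const_mul (s^2)
    have harg : HasDerivAt (fun z : ℝ => -α^2/z - s^2*z) (α^2/y^2 - s^2) y := h1.sub h2
    have hexp : HasDerivAt (fun z => Real.exp (-α^2/z - s^2*z))
        (Real.exp (-α^2/y - s^2*y) * (α^2/y^2 - s^2)) y := harg.exp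
    have hu : HasDerivAt (fun z => α * (Real.sqrt z)⁻¹ - s * Real.sqrt z)
        (α * (-(1/(2*w)) / w^2) - s * (1/(2*w))) y :=
      (hinvsq.const_mul α).sub (hsq.const_mul s)
    have hv : HasDerivAt (fun z => α * (Real.sqrt z)⁻¹ + s * Real.sqrt z)
        (α * (-(1/(2*w)) / w^2) + s * (1/(2*w))) y :=
      (hinvsq.const_mul α).add (hsq.const_mul s)
    have hEu : HasDerivAt (fun z => gigE (α * (Real.sqrt z)⁻¹ - s * Real.sqrt z))
        (Real.exp (-(α * w⁻¹ - s * w)^2) * (α * (-(1/(2*w)) / w^2) - s * (1/(2*w)))) y := by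
      have h := (gigE_hasDerivAt (α * (Real.sqrt y)⁻¹ - s * Real.sqrt y)).comp y hu
      exact h
    have hEv : HasDerivAt (fun z => gigE (α * (Real.sqrt z)⁻¹ + s * Real.sqrt z))
        (Real.exp (-(α * w⁻¹ + s * w)^2) * (α * (-(1/(2*w)) / w^2) + s * (1/(2*w)))) y := by
      have h := (gigE_hasDerivAt (α * (Real.sqrt y)⁻¹ + s * Real.sqrt y)).comp y hv
      exact h
    have H := (((hexp.mul hinvsq).const_mul (1/α^2)).add (hEu.const_mul C₂)).add
      (hEv.const_mul C₃)
    have hFd := H.congr_of_eventuallyEq (by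
      filter_upwards [isOpen_Ioi.mem_nhds (show y ∈ Set.Ioi (0:ℝ) from hy0)] with z hz
      exact hFG z hz)
    refine hFd.congr_deriv ?_
    have e1 : Real.exp (-(α * w⁻¹ - s * w)^2)
        = Real.exp (2*α*s) * Real.exp (-α^2/y - s^2*y) := by
      rw [← Real.exp_add]
      congr 1
      rw [← hwy]
      field_simp
      ring
    have e2 : Real.exp (-(α * w⁻¹ + s * w)^2)
        = Real.exp (-(2*α*s)) * Real.exp (-α^2/y - s^2*y) := by
      rw [← Real.exp_add]
      congr 1
      rw [← hwy]
      field_simp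
      ring
    have hpow : y ^ (-(5:ℝ)/2) = (y^2 * w)⁻¹ := by
      rw [show (-(5:ℝ)/2) = -((2:ℝ) + 1/2) by norm_num, Real.rpow_neg hy0.le,
        Real.rpow_add hy0, Real.rpow_two, hwdef, Real.sqrt_eq_rpow]
    rw [hpow, e1, e2, hC2, hC3, Real.exp_neg]
    have hA : Real.exp (2*α*s) ≠ 0 := Real.exp_ne_zero _
    rw [← hwy, Real.sqrt_sq hw.le]
    field_simp
    ring
  -- nonnegativity of the integrand
  have hpos : ∀ y ∈ Set.Ioi (0:ℝ), 0 ≤ y ^ (-(5:ℝ)/2) * Real.exp (-α^2/y - s^2*y) := by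
    intro y hy
    have hy0 : (0:ℝ) < y := hy
    positivity
  -- limit of G at 0 from the right
  have hsq0 : Tendsto (fun z : ℝ => Real.sqrt z) (𝓝[>] 0) (𝓝[>] 0) := by
    apply tendsto_nhdsWithin_of_tendsto_nhds_of_eventually_within
    · have h := Real.continuous_sqrt.continuousAt (x := 0)
      rw [ContinuousAt, Real.sqrt_zero] at h
      exact h.mono_left nhdsWithin_le_nhds
    · filter_upwards [self_mem_nhdsWithin] with z hz
      exact Real.sqrt_pos.2 hz
  have hinvTop : Tendsto (fun z : ℝ => (Real.sqrt z)⁻¹) (𝓝[>] 0) atTop :=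
    tendsto_inv_nhdsGT_zero.comp hsq0
  have hsq0' : Tendsto (fun z : ℝ => Real.sqrt z) (𝓝[>] 0) (𝓝 0) :=
    hsq0.mono_right nhdsWithin_le_nhds
  have huTop : Tendsto (fun z : ℝ => α * (Real.sqrt z)⁻¹ - s * Real.sqrt z) (𝓝[>] 0) atTop := by
    have h1 : Tendsto (fun z : ℝ => α * (Real.sqrt z)⁻¹) (𝓝[>] 0) atTop :=
      hinvTop.const_mul_atTop hα
    have h2 : Tendsto (fun z : ℝ => -(s * Real.sqrt z)) (𝓝[>] 0) (𝓝 (-(s * 0))) :=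
      (hsq0'.const_mul s).neg
    have := h1.atTop_add h2
    simpa [sub_eq_add_neg] using this
  have hvTop : Tendsto (fun z : ℝ => α * (Real.sqrt z)⁻¹ + s * Real.sqrt z) (𝓝[>] 0) atTop := by
    have h1 : Tendsto (fun z : ℝ => α * (Real.sqrt z)⁻¹) (𝓝[>] 0) atTop :=
      hinvTop.const_mul_atTop hα
    have h2 : Tendsto (fun z : ℝ => s * Real.sqrt z) (𝓝[>] 0) (𝓝 (s * 0)) :=
      hsq0'.const_mul s
    exact h1.atTop_add h2
  have hterm1 : Tendsto (fun z : ℝ =>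
      (1/α^2) * (Real.exp (-α^2/z - s^2*z) * (Real.sqrt z)⁻¹)) (𝓝[>] 0) (𝓝 0) := by
    have base : Tendsto (fun x : ℝ => x ^ ((1:ℝ)/2) * Real.exp (-α^2 * x)) atTop (𝓝 0) :=
      tendsto_rpow_mul_exp_neg_mul_atTop_nhds_zero (1/2) (α^2) (by positivity)
    have hinv : Tendsto (fun z : ℝ => z⁻¹) (𝓝[>] (0:ℝ)) atTop := tendsto_inv_nhdsGT_zero
    have h1 := base.comp hinv
    have h2 : Tendsto (fun z : ℝ => Real.exp (-(s^2)*z) / α^2) (𝓝[>] (0:ℝ))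
        (𝓝 (Real.exp (-(s^2)*0) / α^2)) := by
      apply Tendsto.mono_left _ nhdsWithin_le_nhds
      exact (Real.continuous_exp.comp (continuous_const.mul continuous_id)).div_const _ |>.tendsto 0
    have h3 := h1.mul h2
    rw [zero_mul] at h3
    apply h3.congr'
    filter_upwards [self_mem_nhdsWithin] with z hz
    have hz0 : (0:ℝ) < z := hz
    simp only [Function.comp]
    rw [← Real.sqrt_inv, Real.sqrt_eq_rpow,
      show -α^2/z - s^2*z = -α^2 * z⁻¹ + -(s^2)*z by rw [div_eq_mul_inv]; ring,
      Real.exp_add]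
    ring
  have hEu0 : Tendsto (fun z : ℝ => gigE (α * (Real.sqrt z)⁻¹ - s * Real.sqrt z))
      (𝓝[>] 0) (𝓝 L) := gigE_atTop.comp huTop
  have hEv0 : Tendsto (fun z : ℝ => gigE (α * (Real.sqrt z)⁻¹ + s * Real.sqrt z))
      (𝓝[>] 0) (𝓝 L) := gigE_atTop.comp hvTop
  have hG0 : Tendsto G (𝓝[>] (0:ℝ)) (𝓝 ((C₂ + C₃) * L)) := by
    rw [hG, show (C₂ + C₃) * L = 0 + C₂ * L + C₃ * L by ring]
    exact (hterm1.add (hEu0.const_mul C₂)).add (hEv0.const_mul C₃)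
  have hF0 : F 0 = (C₂ + C₃) * L := by simp [hF]
  have hcont : ContinuousWithinAt F (Set.Ici (0:ℝ)) 0 := by
    have hIoi : ContinuousWithinAt F (Set.Ioi (0:ℝ)) 0 := by
      rw [ContinuousWithinAt, hF0]
      apply hG0.congr'
      filter_upwards [self_mem_nhdsWithin] with z hz
      exact (hFG z hz).symm
    have := hIoi.union (continuousWithinAt_singleton (f := F) (x := (0:ℝ)))
    rwa [Set.Ioi_union_left] at this
  -- limit of G at infinity
  have hsqTop : Tendsto (fun z : ℝ => Real.sqrt z) atTop atTop := by
    refine tendsto_atTop_atTop.2 fun b => ⟨(max b 0)^2, fun a ha => ?_⟩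
    have h1 : Real.sqrt ((max b 0)^2) ≤ Real.sqrt a := Real.sqrt_le_sqrt ha
    rw [Real.sqrt_sq (le_max_right b 0)] at h1
    exact le_trans (le_max_left b 0) h1
  have hinv0 : Tendsto (fun z : ℝ => (Real.sqrt z)⁻¹) atTop (𝓝 0) :=
    hsqTop.inv_tendsto_atTop
  have hterm1Top : Tendsto (fun z : ℝ =>
      (1/α^2) * (Real.exp (-α^2/z - s^2*z) * (Real.sqrt z)⁻¹)) atTop (𝓝 0) := by
    apply squeeze_zero' (g := fun z : ℝ => (1/α^2) * (Real.sqrt z)⁻¹)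
    · filter_upwards [eventually_gt_atTop (0:ℝ)] with z hz
      positivity
    · filter_upwards [eventually_gt_atTop (0:ℝ)] with z hz
      have hE : Real.exp (-α^2/z - s^2*z) ≤ 1 := by
        rw [Real.exp_le_one_iff]
        have h1 : 0 ≤ α^2/z := by positivity
        have h2 : 0 ≤ s^2*z := by positivity
        have h3 : -α^2/z = -(α^2/z) := by ring
        linarith
      have hi : 0 ≤ (Real.sqrt z)⁻¹ := by positivity
      have h2 : (0:ℝ) ≤ 1/α^2 := by positivity
      exact mul_le_mul_of_nonneg_left (mul_le_of_le_one_left hi hE) h2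
    · have h := hinv0.const_mul (1/α^2)
      rw [mul_zero] at h
      exact h
  have hGTop : Tendsto G atTop (𝓝 ((C₃ - C₂) * L)) := by
    rcases hs.eq_or_lt with hs0 | hs0
    · -- s = 0
      subst hs0
      have hu0 : Tendsto (fun z : ℝ => α * (Real.sqrt z)⁻¹ - 0 * Real.sqrt z) atTop (𝓝 0) := by
        simpa using hinv0.const_mul α
      have hv0 : Tendsto (fun z : ℝ => α * (Real.sqrt z)⁻¹ + 0 * Real.sqrt z) atTop (𝓝 0) := by
        simpa using hinv0.const_mul α
      have hEu : Tendsto (fun z : ℝ => gigE (α * (Real.sqrt z)⁻¹ - 0 * Real.sqrt z))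
          atTop (𝓝 (gigE 0)) := (gigE_cont.continuousAt.tendsto).comp hu0
      have hEv : Tendsto (fun z : ℝ => gigE (α * (Real.sqrt z)⁻¹ + 0 * Real.sqrt z))
          atTop (𝓝 (gigE 0)) := (gigE_cont.continuousAt.tendsto).comp hv0
      rw [gigE_zero] at hEu hEv
      rw [hG, show (C₃ - C₂) * L = 0 + C₂ * 0 + C₃ * 0 by
        rw [hC2, hC3]; norm_num]
      exact (hterm1Top.add (hEu.const_mul C₂)).add (hEv.const_mul C₃)
    · -- s > 0
      have hu : Tendsto (fun z : ℝ => α * (Real.sqrt z)⁻¹ - s * Real.sqrt z) atTop atBot := by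
        have h1 : Tendsto (fun z : ℝ => α * (Real.sqrt z)⁻¹) atTop (𝓝 (α * 0)) :=
          hinv0.const_mul α
        have h2 : Tendsto (fun z : ℝ => -(s * Real.sqrt z)) atTop atBot :=
          tendsto_neg_atTop_atBot.comp (hsqTop.const_mul_atTop hs0)
        have := h1.add_atBot h2
        simpa [sub_eq_add_neg] using this
      have hv : Tendsto (fun z : ℝ => α * (Real.sqrt z)⁻¹ + s * Real.sqrt z) atTop atTop := by
        have h1 : Tendsto (fun z : ℝ => α * (Real.sqrt z)⁻¹) atTop (𝓝 (α * 0)) :=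
          hinv0.const_mul α
        have h2 : Tendsto (fun z : ℝ => s * Real.sqrt z) atTop atTop :=
          hsqTop.const_mul_atTop hs0
        exact (h2.atTop_add h1).congr (fun z => by ring)
      have hEu : Tendsto (fun z : ℝ => gigE (α * (Real.sqrt z)⁻¹ - s * Real.sqrt z))
          atTop (𝓝 (-(Real.sqrt π / 2))) := gigE_atBot.comp hu
      have hEv : Tendsto (fun z : ℝ => gigE (α * (Real.sqrt z)⁻¹ + s * Real.sqrt z))
          atTop (𝓝 (Real.sqrt π / 2)) := gigE_atTop.comp hv
      rw [hG, show (C₃ - C₂) * L = 0 + C₂ * (-(Real.sqrt π / 2)) + C₃ * (Real.sqrt π / 2) by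
        rw [hL]; ring]
      exact (hterm1Top.add (hEu.const_mul C₂)).add (hEv.const_mul C₃)
  have hFTop : Tendsto F atTop (𝓝 ((C₃ - C₂) * L)) := by
    apply hGTop.congr'
    filter_upwards [eventually_gt_atTop (0:ℝ)] with z hz
    exact (hFG z hz).symm
  have hint := integral_Ioi_of_hasDerivAt_of_nonneg hcont hderiv hpos hFTop
  rw [hint, hF0, hC2, hC3, hL]
  field_simp
  ring

theorem stmt_3 (d c t : ℝ) (hd : 0 < d) (hc : 0 ≤ c) :
    (∫ y in Set.Ioi (0 : ℝ),
        Real.exp (-t ^ 2 * y) * (y ^ (-(5 : ℝ) / 2) *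
          Real.exp (-1 / (4 * d ^ 2 * y) - c ^ 2 * y / 2))) /
      (∫ y in Set.Ioi (0 : ℝ),
        y ^ (-(5 : ℝ) / 2) * Real.exp (-1 / (4 * d ^ 2 * y) - c ^ 2 * y / 2)) =
      ((d + Real.sqrt (t ^ 2 + c ^ 2 / 2)) / (d + c / Real.sqrt 2)) *
        Real.exp (-Real.sqrt (t ^ 2 + c ^ 2 / 2) / d) *
        Real.exp ((c / Real.sqrt 2) / d) := by
  have hd' : d ≠ 0 := hd.ne'
  set s₁ : ℝ := Real.sqrt (t ^ 2 + c ^ 2 / 2) with hs1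
  set s₂ : ℝ := c / Real.sqrt 2 with hs2
  have hs1sq : s₁ ^ 2 = t ^ 2 + c ^ 2 / 2 := Real.sq_sqrt (by positivity)
  have hs2sq : s₂ ^ 2 = c ^ 2 / 2 := by
    rw [hs2, div_pow, Real.sq_sqrt (by norm_num : (0:ℝ) ≤ 2)]
  have hs1n : 0 ≤ s₁ := Real.sqrt_nonneg _
  have hs2n : 0 ≤ s₂ := div_nonneg hc (Real.sqrt_nonneg _)
  have hα : (0:ℝ) < 1/(2*d) := by positivity
  -- numerator
  have hnum : (∫ y in Set.Ioi (0 : ℝ),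
      Real.exp (-t ^ 2 * y) * (y ^ (-(5 : ℝ) / 2) *
        Real.exp (-1 / (4 * d ^ 2 * y) - c ^ 2 * y / 2)))
      = ∫ y in Set.Ioi (0:ℝ), y ^ (-(5:ℝ)/2) * Real.exp (-(1/(2*d))^2 / y - s₁^2 * y) := by
    apply setIntegral_congr_fun measurableSet_Ioi
    intro y hy
    have hy0 : (0:ℝ) < y := hy
    have hy' : y ≠ 0 := hy0.ne'
    dsimp only
    rw [mul_left_comm, ← Real.exp_add,
      show -t ^ 2 * y + (-1 / (4 * d ^ 2 * y) - c ^ 2 * y / 2)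
        = -(1/(2*d))^2 / y - s₁^2 * y from by rw [hs1sq]; field_simp; ring]
  have hden : (∫ y in Set.Ioi (0 : ℝ),
      y ^ (-(5 : ℝ) / 2) * Real.exp (-1 / (4 * d ^ 2 * y) - c ^ 2 * y / 2))
      = ∫ y in Set.Ioi (0:ℝ), y ^ (-(5:ℝ)/2) * Real.exp (-(1/(2*d))^2 / y - s₂^2 * y) := by
    apply setIntegral_congr_fun measurableSet_Ioi
    intro y hy
    have hy0 : (0:ℝ) < y := hy
    have hy' : y ≠ 0 := hy0.ne'
    dsimp only
    rw [show -1 / (4 * d ^ 2 * y) - c ^ 2 * y / 2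
        = -(1/(2*d))^2 / y - s₂^2 * y from by rw [hs2sq]; field_simp; ring]
  rw [hnum, hden, gig_key _ _ hα hs1n, gig_key _ _ hα hs2n]
  have e1 : -(2*(1/(2*d))*s₁) = -s₁/d := by field_simp
  have e2 : -(2*(1/(2*d))*s₂) = -s₂/d := by field_simp
  have e3 : 1/(2*(1/(2*d))) = d := by field_simp
  rw [e1, e2, e3]
  have hπ : (0:ℝ) < Real.sqrt π := Real.sqrt_pos.2 Real.pi_pos
  have hden2 : 0 < d + s₂ := by linarith
  rw [show -s₂/d = -(s₂/d) by ring, show -s₁/d = -(s₁/d) by ring, Real.exp_neg, Real.exp_neg]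
  have hE2 : Real.exp (s₂/d) ≠ 0 := Real.exp_ne_zero _
  have hE1 : Real.exp (s₁/d) ≠ 0 := Real.exp_ne_zero _
  field_simp
  ring
end

section
/- For all real numbers a > 0 and t ≥ 0, Γ(a)/Γ(a + t) = exp(-ψ(a)·t) · ∏_{k=0}^∞ (1 + t/(a + k)) · exp(-t/(a + k)), where ψ(a) = Γ'(a)/Γ(a) is the digamma function (the logarithmic derivative of the real Gamma function at a). -/
open Real

section Aux
open Filter Finset Topology Set


lemma aux_summable (a t : ℝ) (ha : 0 < a) (ht : 0 ≤ t) :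
    Summable (fun k : ℕ => Real.log (1 + t / (a + k)) - t / (a + k)) := by
  have hden : ∀ k : ℕ, 0 < a + (k : ℝ) := fun k => by positivity
  set c := min a 1 with hc
  have hc0 : 0 < c := lt_min ha one_pos
  have key : ∀ k : ℕ, t / (a + k) - Real.log (1 + t / (a + k)) ≤ (t / c) ^ 2 * (1 / ((k : ℝ) + 1)) ^ 2 := by
    intro k
    set x := t / (a + (k : ℝ)) with hx
    have hx0 : 0 ≤ x := by positivity
    -- log (1 + x) ≥ x - x ^ 2
    have h1 : Real.exp (x - x ^ 2) ≤ 1 + x := by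
      have h2 := Real.add_one_le_exp (x ^ 2 - x)
      have h3 : Real.exp (x - x ^ 2) = (Real.exp (x ^ 2 - x))⁻¹ := by
        rw [← Real.exp_neg]; ring_nf
      rw [h3, inv_le_iff_one_le_mul₀ (Real.exp_pos _)]
      nlinarith [Real.exp_pos (x ^ 2 - x)]
    have h4 : x - x ^ 2 ≤ Real.log (1 + x) := by
      have := Real.log_le_log (Real.exp_pos _) h1
      rwa [Real.log_exp] at this
    have h5 : x ≤ t / c * (1 / ((k : ℝ) + 1)) := by
      rw [hx, div_mul_div_comm, mul_one]
      apply div_le_div_of_nonneg_left ht (by positivity)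
      nlinarith [min_le_left a 1, min_le_right a 1, (Nat.cast_nonneg k : (0:ℝ) ≤ k)]
    calc t / (a + k) - Real.log (1 + t / (a + k)) ≤ x ^ 2 := by rw [← hx]; linarith
    _ ≤ (t / c * (1 / ((k : ℝ) + 1))) ^ 2 := by nlinarith
    _ = (t / c) ^ 2 * (1 / ((k : ℝ) + 1)) ^ 2 := by ring
  have hnn : ∀ k : ℕ, 0 ≤ t / (a + k) - Real.log (1 + t / (a + k)) := by
    intro k
    have := Real.log_le_sub_one_of_pos (x := 1 + t / (a + (k : ℝ))) (by positivity)
    linarith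
  have hb : Summable (fun k : ℕ => (t / c) ^ 2 * (1 / ((k : ℝ) + 1)) ^ 2) := by
    apply Summable.mul_left
    have : Summable (fun k : ℕ => 1 / ((k : ℝ)) ^ 2) := summable_one_div_nat_pow.mpr one_lt_two
    have := (summable_nat_add_iff 1).mpr this
    refine this.congr fun k => ?_
    push_cast
    rw [div_pow, one_pow]
  have := Summable.of_nonneg_of_le hnn key hb
  simpa using this.neg


lemma aux_log_sub (b : ℝ) (hb : 0 ≤ b) :
    Tendsto (fun n : ℕ => Real.log (b + n) - Real.log n) atTop (𝓝 0) := by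
  have h1 : Tendsto (fun n : ℕ => b / n + 1) atTop (𝓝 1) := by
    simpa using (tendsto_const_div_atTop_nhds_zero_nat b).add (tendsto_const_nhds (x := (1:ℝ)))
  have h2 : Tendsto (fun n : ℕ => Real.log (b / n + 1)) atTop (𝓝 0) := by
    have := (Real.continuousAt_log one_ne_zero).tendsto.comp h1
    simpa [Function.comp_def] using this
  apply h2.congr'
  filter_upwards [eventually_gt_atTop 0] with n hn
  have hn' : (0:ℝ) < n := by exact_mod_cast hn
  rw [show b / n + 1 = (b + n) / n by field_simp, Real.log_div (by positivity) hn'.ne']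

lemma aux_digamma (a : ℝ) (ha : 0 < a) :
    Tendsto (fun n : ℕ => ∑ k ∈ Finset.range (n + 1), 1 / (a + k) - Real.log n) atTop
      (𝓝 (-(deriv Real.Gamma a / Real.Gamma a))) := by
  set f := Real.log ∘ Real.Gamma with hf
  have hder : ∀ {x : ℝ}, 0 < x → DifferentiableAt ℝ f x := by
    intro x hx
    refine ((Real.differentiableAt_Gamma ?_).log (Real.Gamma_ne_zero ?_)) <;>
      exact fun m => ((neg_nonpos.mpr (m.cast_nonneg)).trans_lt hx).ne'
  have h_rec : ∀ x : ℝ, 0 < x → f (x + 1) = f x + Real.log x := by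
    intro x hx
    simp only [f, Function.comp_apply, Real.Gamma_add_one hx.ne',
      Real.log_mul hx.ne' (Real.Gamma_pos_of_pos hx).ne', add_comm]
  have hder_rec : ∀ x : ℝ, 0 < x → deriv f (x + 1) = deriv f x + 1 / x := by
    intro x hx
    rw [← deriv_comp_add_const, one_div, ← Real.deriv_log,
      ← deriv_add (hder hx) (Real.differentiableAt_log hx.ne')]
    apply Filter.EventuallyEq.deriv_eq
    filter_upwards [eventually_gt_nhds hx] using h_rec
  have hsum : ∀ n : ℕ, deriv f (a + n) = deriv f a + ∑ k ∈ Finset.range n, 1 / (a + k) := by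
    intro n
    induction n with
    | zero => simp
    | succ n ih =>
      have h1 : a + ((n + 1 : ℕ) : ℝ) = (a + n) + 1 := by push_cast; ring
      rw [h1, hder_rec _ (by positivity), ih, Finset.sum_range_succ]
      ring
  have hc : ConvexOn ℝ (Ioi 0) f := Real.convexOn_log_Gamma
  have hLB : ∀ n : ℕ, Real.log (a + n) ≤ deriv f (a + (n + 1 : ℕ)) := by
    intro n
    have hx : (0:ℝ) < a + n := by positivity
    have := hc.slope_le_deriv (mem_Ioi.mpr hx) (mem_Ioi.mpr (by linarith : (0:ℝ) < a + n + 1))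
      (by linarith) (hder (by linarith))
    rw [slope_def_field, show a + (n:ℝ) + 1 - (a + n) = 1 by ring, div_one,
      h_rec _ hx, add_sub_cancel_left] at this
    convert this using 2
    push_cast; ring
  have hUB : ∀ n : ℕ, deriv f (a + (n + 1 : ℕ)) ≤ Real.log (a + n + 1) := by
    intro n
    have hx : (0:ℝ) < a + n + 1 := by positivity
    have := hc.deriv_le_slope (mem_Ioi.mpr hx) (mem_Ioi.mpr (by linarith : (0:ℝ) < a + n + 2))
      (by linarith) (hder hx)
    rw [slope_def_field, show a + (n:ℝ) + 2 - (a + n + 1) = 1 by ring, div_one,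
      show a + (n:ℝ) + 2 = (a + n + 1) + 1 by ring, h_rec _ hx, add_sub_cancel_left] at this
    convert this using 2
    push_cast; ring
  have hgoal : deriv f a = deriv Real.Gamma a / Real.Gamma a := by
    rw [hf, Function.comp_def, deriv.log (Real.differentiableAt_Gamma
      (fun m => ((neg_nonpos.mpr (m.cast_nonneg)).trans_lt ha).ne'))
      (Real.Gamma_pos_of_pos ha).ne']
  rw [← hgoal]
  have hg : Tendsto (fun n : ℕ => Real.log (a + n) - Real.log n - deriv f a) atTop
      (𝓝 (-deriv f a)) := by
    simpa using (aux_log_sub a ha.le).sub (tendsto_const_nhds (x := deriv f a))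
  have hh : Tendsto (fun n : ℕ => Real.log (a + 1 + n) - Real.log n - deriv f a) atTop
      (𝓝 (-deriv f a)) := by
    simpa using (aux_log_sub (a + 1) (by linarith)).sub (tendsto_const_nhds (x := deriv f a))
  refine tendsto_of_tendsto_of_tendsto_of_le_of_le' hg hh ?_ ?_
  · filter_upwards with n
    have := hLB n
    rw [hsum (n + 1)] at this
    push_cast at this ⊢
    linarith
  · filter_upwards with n
    have := hUB n
    rw [hsum (n + 1)] at this
    rw [show a + 1 + (n:ℝ) = a + (n:ℝ) + 1 by ring]
    push_cast at this ⊢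
    linarith


lemma aux_ratio (a t : ℝ) (ha : 0 < a) (ht : 0 ≤ t) :
    Tendsto (fun n : ℕ => ∑ k ∈ Finset.range (n + 1), Real.log (1 + t / (a + k)) - t * Real.log n)
      atTop (𝓝 (Real.log (Real.Gamma a) - Real.log (Real.Gamma (a + t)))) := by
  have hat : (0:ℝ) < a + t := by linarith
  have hΓat : 0 < Real.Gamma (a + t) := Real.Gamma_pos_of_pos hat
  have hΓa : 0 < Real.Gamma a := Real.Gamma_pos_of_pos ha
  have hu : Tendsto (fun n : ℕ => Real.GammaSeq a n / Real.GammaSeq (a + t) n) atTop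
      (𝓝 (Real.Gamma a / Real.Gamma (a + t))) :=
    (Real.GammaSeq_tendsto_Gamma a).div (Real.GammaSeq_tendsto_Gamma (a + t)) hΓat.ne'
  have hlog : Tendsto (fun n : ℕ => Real.log (Real.GammaSeq a n / Real.GammaSeq (a + t) n)) atTop
      (𝓝 (Real.log (Real.Gamma a / Real.Gamma (a + t)))) :=
    (Real.continuousAt_log (by positivity)).tendsto.comp hu
  rw [Real.log_div hΓa.ne' hΓat.ne'] at hlog
  apply hlog.congr'
  filter_upwards [eventually_gt_atTop 0] with n hn
  have hn' : (0:ℝ) < n := by exact_mod_cast hn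
  have hden : ∀ k : ℕ, (0:ℝ) < a + k := fun k => by positivity
  have hden' : ∀ k : ℕ, (0:ℝ) < a + t + k := fun k => by positivity
  have hPa : (0:ℝ) < ∏ j ∈ Finset.range (n + 1), (a + j) :=
    Finset.prod_pos fun j _ => hden j
  have hPb : (0:ℝ) < ∏ j ∈ Finset.range (n + 1), (a + t + j) :=
    Finset.prod_pos fun j _ => hden' j
  have hprod : ∏ j ∈ Finset.range (n + 1), (1 + t / (a + j)) =
      (∏ j ∈ Finset.range (n + 1), (a + t + j)) / ∏ j ∈ Finset.range (n + 1), (a + j) := by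
    rw [← Finset.prod_div_distrib]
    refine Finset.prod_congr rfl fun j _ => ?_
    field_simp
    ring
  have hkey : Real.GammaSeq a n / Real.GammaSeq (a + t) n =
      (n : ℝ) ^ (-t) * ∏ j ∈ Finset.range (n + 1), (1 + t / (a + j)) := by
    rw [hprod, Real.GammaSeq, Real.GammaSeq,
      show (n : ℝ) ^ (-t) = (n : ℝ) ^ a / (n : ℝ) ^ (a + t) by
        rw [← Real.rpow_sub hn']; ring_nf]
    have h1 : (n:ℝ) ^ a ≠ 0 := by positivity
    have h2 : (n:ℝ) ^ (a + t) ≠ 0 := by positivity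
    have h3 : (n.factorial : ℝ) ≠ 0 := by positivity
    field_simp
  have hP1 : (0:ℝ) < ∏ j ∈ Finset.range (n + 1), (1 + t / (a + j)) :=
    Finset.prod_pos fun j _ => by positivity
  rw [hkey, Real.log_mul (Real.rpow_pos_of_pos hn' _).ne' hP1.ne', Real.log_rpow hn',
    Real.log_prod (fun j _ => (by positivity : (1:ℝ) + t / (a + (j:ℕ)) ≠ 0))]
  ring

end Aux

open Filter Finset Topology in
theorem stmt_6 (a t : ℝ) (ha : 0 < a) (ht : 0 ≤ t) :
    Real.Gamma a / Real.Gamma (a + t) =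
      Real.exp (-(deriv Real.Gamma a / Real.Gamma a) * t) *
        ∏' k : ℕ, (1 + t / (a + k)) * Real.exp (-t / (a + k)) := by
  have hat : (0:ℝ) < a + t := by linarith
  have hΓa : 0 < Real.Gamma a := Real.Gamma_pos_of_pos ha
  have hΓat : 0 < Real.Gamma (a + t) := Real.Gamma_pos_of_pos hat
  have hgpos : ∀ k : ℕ, 0 < (1 + t / (a + (k:ℝ))) * Real.exp (-t / (a + k)) := by
    intro k; positivity
  have hlogg : ∀ k : ℕ, Real.log ((1 + t / (a + (k:ℝ))) * Real.exp (-t / (a + k))) =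
      Real.log (1 + t / (a + k)) - t / (a + k) := by
    intro k
    have h1 : (0:ℝ) < 1 + t / (a + k) := by positivity
    rw [Real.log_mul h1.ne' (Real.exp_ne_zero _), Real.log_exp, neg_div, ← sub_eq_add_neg]
  have hsum := aux_summable a t ha ht
  have hslog : Summable (fun k : ℕ =>
      Real.log ((1 + t / (a + (k:ℝ))) * Real.exp (-t / (a + k)))) := by
    exact hsum.congr fun k => (hlogg k).symm
  have htp : ∏' k : ℕ, (1 + t / (a + (k:ℝ))) * Real.exp (-t / (a + k)) =
      Real.exp (∑' k : ℕ, Real.log ((1 + t / (a + (k:ℝ))) * Real.exp (-t / (a + k)))) := by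
    have := Real.rexp_tsum_eq_tprod
      (f := fun (k : ℕ) => (1 + t / (a + (k:ℝ))) * Real.exp (-t / (a + k)))
      (fun k => hgpos k) hslog
    exact this.symm
  have htsum : (∑' k : ℕ, Real.log ((1 + t / (a + (k:ℝ))) * Real.exp (-t / (a + k)))) =
      ∑' k : ℕ, (Real.log (1 + t / (a + (k:ℝ))) - t / (a + k)) := tsum_congr hlogg
  rw [htp, htsum, ← Real.exp_add, ← Real.exp_log (div_pos hΓa hΓat),
    Real.log_div hΓa.ne' hΓat.ne', Real.exp_eq_exp]
  set S := ∑' k : ℕ, (Real.log (1 + t / (a + (k:ℝ))) - t / (a + k)) with hS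
  have h1 : Tendsto (fun n : ℕ => ∑ k ∈ Finset.range (n + 1),
      (Real.log (1 + t / (a + (k:ℝ))) - t / (a + k))) atTop (𝓝 S) :=
    hsum.hasSum.tendsto_sum_nat.comp (tendsto_add_atTop_nat 1)
  have h2 : Tendsto (fun n : ℕ => ∑ k ∈ Finset.range (n + 1),
      (Real.log (1 + t / (a + (k:ℝ))) - t / (a + k))) atTop
      (𝓝 ((Real.log (Real.Gamma a) - Real.log (Real.Gamma (a + t))) -
        t * (-(deriv Real.Gamma a / Real.Gamma a)))) := by
    have := (aux_ratio a t ha ht).sub ((aux_digamma a ha).const_mul t)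
    refine this.congr fun n => ?_
    rw [Finset.sum_sub_distrib, mul_sub, Finset.mul_sum]
    simp only [mul_one_div]
    ring
  have hSe := tendsto_nhds_unique h1 h2
  linarith [hSe]
end

section
/- Let (d_k)_{k≥1} be a sequence of positive real numbers with ∑_{k=1}^∞ 1/d_k² < ∞, and let μ be a probability measure on the real line, concentrated on [0, ∞), such that for all real t, ∫ exp(-t²·ω) dμ(ω) = ∏_{k=1}^∞ (1 + |t|/d_k) · exp(-|t|/d_k). Fix a real number c and let Z = ∫ exp(-(c²/2)·ω) dμ(ω). Then Z = ∏_{k=1}^∞ (1 + (|c|/√2)/d_k) · exp(-(|c|/√2)/d_k) > 0, and the exponentially tilted probability measure ν defined by dν/dμ(ω) = Z⁻¹ · exp(-(c²/2)·ω) satisfies, for every real t, ∫ exp(-t²·ω) dν(ω) = ∏_{k=1}^∞ ((d_k + √(t² + c²/2)) / (d_k + |c|/√2)) · exp(-√(t² + c²/2)/d_k) · exp((|c|/√2)/d_k). -/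
open Real MeasureTheory
open scoped NNReal ENNReal

theorem stmt_9 (d : ℕ → ℝ) (hd : ∀ k, 0 < d k)
    (hsum : Summable fun k => 1 / d k ^ 2)
    (μ : Measure ℝ) (hμ : IsProbabilityMeasure μ) (hμ0 : μ (Set.Iio 0) = 0)
    (hLT : ∀ t : ℝ, ∫ ω, Real.exp (-t ^ 2 * ω) ∂μ =
        ∏' k, (1 + |t| / d k) * Real.exp (-|t| / d k))
    (c : ℝ) (Z : ℝ) (hZ : Z = ∫ ω, Real.exp (-(c ^ 2 / 2) * ω) ∂μ) :
    Z = (∏' k, (1 + (|c| / Real.sqrt 2) / d k) * Real.exp (-(|c| / Real.sqrt 2) / d k)) ∧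
      0 < Z ∧
      ∀ t : ℝ,
        ∫ ω, Real.exp (-t ^ 2 * ω)
            ∂(μ.withDensity fun ω => ENNReal.ofReal (Z⁻¹ * Real.exp (-(c ^ 2 / 2) * ω))) =
          ∏' k, ((d k + Real.sqrt (t ^ 2 + c ^ 2 / 2)) / (d k + |c| / Real.sqrt 2)) *
            Real.exp (-Real.sqrt (t ^ 2 + c ^ 2 / 2) / d k) *
            Real.exp ((|c| / Real.sqrt 2) / d k) := by
  set a : ℝ := |c| / Real.sqrt 2 with ha_def
  have ha : 0 ≤ a := div_nonneg (abs_nonneg _) (Real.sqrt_nonneg _)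
  have ha2 : a ^ 2 = c ^ 2 / 2 := by
    rw [ha_def, div_pow, sq_abs, Real.sq_sqrt (by norm_num : (0:ℝ) ≤ 2)]
  -- summability of the log terms
  have hsummable : ∀ x : ℝ, 0 ≤ x →
      Summable (fun k => Real.log (1 + x / d k) - x / d k) := by
    intro x hx
    apply Summable.of_abs
    have hbound : ∀ k, |Real.log (1 + x / d k) - x / d k| ≤ x ^ 2 * (1 / d k ^ 2) := by
      intro k
      set y : ℝ := x / d k with hy_def
      have hy : 0 ≤ y := div_nonneg hx (hd k).le
      have h1y : 0 < 1 + y := by linarith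
      have h1 : Real.log (1 + y) ≤ y := by
        have := Real.log_le_sub_one_of_pos h1y
        linarith
      have h2 : y - y ^ 2 ≤ Real.log (1 + y) := by
        have := Real.one_sub_inv_le_log_of_pos h1y
        have hinv : 1 - (1 + y)⁻¹ = y / (1 + y) := by
          field_simp
          ring
        rw [hinv] at this
        have h3 : y - y ^ 2 ≤ y / (1 + y) := by
          rw [le_div_iff₀ h1y]; nlinarith
        have h4 : y / (1 + y) ≤ log (1 + y) := this
        linarith
      have habs : |Real.log (1 + y) - y| ≤ y ^ 2 := by
        rw [abs_of_nonpos (by linarith)]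
        linarith
      calc |Real.log (1 + y) - y| ≤ y ^ 2 := habs
        _ = x ^ 2 * (1 / d k ^ 2) := by
            rw [hy_def, div_pow]; ring
    exact Summable.of_nonneg_of_le (fun k => abs_nonneg _) hbound (hsum.mul_left _)
  set S : ℝ → ℝ := fun x => ∑' k, (Real.log (1 + x / d k) - x / d k) with hS_def
  have hprod : ∀ x : ℝ, 0 ≤ x →
      HasProd (fun k => (1 + x / d k) * Real.exp (-x / d k)) (Real.exp (S x)) := by
    intro x hx
    have := (hsummable x hx).hasSum.rexp
    convert this using 1
    funext k
    have h1y : 0 < 1 + x / d k := by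
      have : 0 ≤ x / d k := div_nonneg hx (hd k).le
      linarith
    simp only [Function.comp_apply]
    rw [Real.exp_sub, Real.exp_log h1y, neg_div, Real.exp_neg]
    ring
  -- Z equals the product
  have hZ1 : Z = ∏' k, (1 + a / d k) * Real.exp (-a / d k) := by
    rw [hZ, ← ha2]
    have := hLT a
    rwa [abs_of_nonneg ha] at this
  have hZexp : Z = Real.exp (S a) := by
    rw [hZ1, (hprod a ha).tprod_eq]
  have hZpos : 0 < Z := hZexp ▸ Real.exp_pos _
  refine ⟨hZ1, hZpos, ?_⟩
  intro t
  set s : ℝ := Real.sqrt (t ^ 2 + c ^ 2 / 2) with hs_def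
  have hs : 0 ≤ s := Real.sqrt_nonneg _
  have hs2 : s ^ 2 = t ^ 2 + c ^ 2 / 2 :=
    Real.sq_sqrt (by positivity)
  -- integral over μ of exp(-s²ω)
  have hIs : ∫ ω, Real.exp (-s ^ 2 * ω) ∂μ = Real.exp (S s) := by
    rw [hLT s, abs_of_nonneg hs, (hprod s hs).tprod_eq]
  -- the tilted integral
  have hmeas : Measurable (fun ω : ℝ => (Z⁻¹ * Real.exp (-(c ^ 2 / 2) * ω)).toNNReal) := by
    fun_prop
  have hdens : (fun ω : ℝ => ENNReal.ofReal (Z⁻¹ * Real.exp (-(c ^ 2 / 2) * ω))) =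
      (fun ω : ℝ => ((Z⁻¹ * Real.exp (-(c ^ 2 / 2) * ω)).toNNReal : ℝ≥0∞)) := rfl
  have hLHS : ∫ ω, Real.exp (-t ^ 2 * ω)
      ∂(μ.withDensity fun ω => ENNReal.ofReal (Z⁻¹ * Real.exp (-(c ^ 2 / 2) * ω))) =
      Z⁻¹ * Real.exp (S s) := by
    rw [hdens, integral_withDensity_eq_integral_smul hmeas]
    have : ∀ ω : ℝ, ((Z⁻¹ * Real.exp (-(c ^ 2 / 2) * ω)).toNNReal : ℝ≥0)
        • Real.exp (-t ^ 2 * ω) = Z⁻¹ * Real.exp (-s ^ 2 * ω) := by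
      intro ω
      have hnn : 0 ≤ Z⁻¹ * Real.exp (-(c ^ 2 / 2) * ω) :=
        mul_nonneg (inv_nonneg.mpr hZpos.le) (Real.exp_pos _).le
      rw [NNReal.smul_def, smul_eq_mul, Real.coe_toNNReal _ hnn, mul_assoc,
        ← Real.exp_add, hs2]
      ring_nf
    simp_rw [this]
    rw [integral_const_mul, hIs]
  rw [hLHS]
  -- the RHS product
  have hRHS : HasProd (fun k => ((d k + s) / (d k + a)) *
      Real.exp (-s / d k) * Real.exp (a / d k)) (Real.exp (S s - S a)) := by
    have := ((hsummable s hs).hasSum.sub (hsummable a ha).hasSum).rexp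
    convert this using 1
    funext k
    have hdk := hd k
    have hda : 0 < d k + a := by linarith
    have h1s : 0 < 1 + s / d k := by
      have : 0 ≤ s / d k := div_nonneg hs hdk.le; linarith
    have h1a : 0 < 1 + a / d k := by
      have : 0 ≤ a / d k := div_nonneg ha hdk.le; linarith
    simp only [Function.comp_apply]
    rw [show Real.log (1 + s / d k) - s / d k - (Real.log (1 + a / d k) - a / d k)
        = (Real.log (1 + s / d k) - Real.log (1 + a / d k)) + (a / d k + -(s / d k)) by ring,
      Real.exp_add, Real.exp_sub, Real.exp_log h1s, Real.exp_log h1a, Real.exp_add]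
    rw [show (1 + s / d k) / (1 + a / d k) = (d k + s) / (d k + a) by
      rw [div_eq_div_iff h1a.ne' hda.ne']; field_simp]
    rw [show -s / d k = -(s / d k) by ring]
    ring
  rw [hRHS.tprod_eq, Real.exp_sub, hZexp, div_eq_mul_inv, mul_comm]
end
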